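/- For any connected graph G of order n ≥ 4 and size m, the total dominator chromatic number of the complement of the central graph of G equals n if G is a tree (i.e., equals m+1 when m = n−1), and equals m otherwise (when m ≥ n). -/

import Mathlib

open SimpleGraph

/-- The central graph `C(G)`: subdivide each edge of `G` once (vertex `c_e` for each
edge `e`) and join all non-adjacent pairs of original vertices. -/
def centralGraph {V : Type*} (G : SimpleGraph V) : SimpleGraph (V ⊕ G.edgeSet) where
  Adj x y :=
    match x, y with
    | Sum.inl u, Sum.inl v => u ≠ v ∧ ¬ G.Adj u v
    | Sum.inl u, Sum.inr e => u ∈ (e : Sym2 V)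
    | Sum.inr e, Sum.inl u => u ∈ (e : Sym2 V)
    | Sum.inr _, Sum.inr _ => False
  symm := by
    refine ⟨?_⟩
    rintro (u | e) (v | f) h
    · exact ⟨h.1.symm, fun a => h.2 a.symm⟩
    · exact h
    · exact h
    · exact h
  loopless := by
    refine ⟨?_⟩
    rintro (u | e) h
    · exact h.1 rfl
    · exact h

/-- `f` is a total dominator coloring of `G`: a proper coloring such that every
vertex is adjacent to all vertices of some (nonempty) color class. -/
def IsTDColoring {V : Type*} (G : SimpleGraph V) (f : V → ℕ) : Prop :=
  (∀ u v, G.Adj u v → f u ≠ f v) ∧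
  ∀ v, ∃ c, (∃ w, f w = c) ∧ ∀ w, f w = c → G.Adj v w

/-- Total dominator chromatic number: minimum number of colors in a TDC. -/
noncomputable def tdcn {V : Type*} (G : SimpleGraph V) : ℕ :=
  sInf {k | ∃ f : V → ℕ, IsTDColoring G f ∧ ∀ v, f v < k}

/-- Total domination number. -/
noncomputable def tdn {V : Type*} (G : SimpleGraph V) : ℕ :=
  sInf {k | ∃ S : Set V, S.ncard = k ∧ ∀ v, ∃ u ∈ S, G.Adj v u}

/-- The join of two graphs. -/
def joinGraph {α β : Type*} (G : SimpleGraph α) (H : SimpleGraph β) :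
    SimpleGraph (α ⊕ β) where
  Adj x y :=
    match x, y with
    | Sum.inl u, Sum.inl v => G.Adj u v
    | Sum.inr u, Sum.inr v => H.Adj u v
    | Sum.inl _, Sum.inr _ => True
    | Sum.inr _, Sum.inl _ => True
  symm := by refine ⟨?_⟩; rintro (u | u) (v | v) h <;> first | exact h.symm | trivial
  loopless := by refine ⟨?_⟩; rintro (u | u) h <;> exact h.ne rfl

/-- The path graph on `n` vertices. -/
def pathG (n : ℕ) : SimpleGraph (Fin n) :=
  SimpleGraph.fromRel (fun i j => (i : ℕ) + 1 = (j : ℕ))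

/-- The cycle graph on `n` vertices. -/
def cycleG (n : ℕ) : SimpleGraph (ZMod n) :=
  SimpleGraph.fromRel (fun i j => i - j = 1)

/-- The double star `S_{1,n,n}`: center `0`, support vertices `1,...,n`
(adjacent to the center), each `i` with its own pendant `n+i`. -/
def doubleStar (n : ℕ) : SimpleGraph (Fin (2 * n + 1)) :=
  SimpleGraph.fromRel (fun a b =>
    ((a : ℕ) = 0 ∧ 1 ≤ (b : ℕ) ∧ (b : ℕ) ≤ n) ∨
    (1 ≤ (a : ℕ) ∧ (a : ℕ) ≤ n ∧ (b : ℕ) = (a : ℕ) + n))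

/-- The disjoint union of a family of graphs. -/
def sigmaGraph {ι : Type*} {V : ι → Type*} (G : ∀ i, SimpleGraph (V i)) :
    SimpleGraph (Σ i, V i) :=
  SimpleGraph.fromRel (fun x y =>
    ∃ (i : ι) (u v : V i), (G i).Adj u v ∧ x = ⟨i, u⟩ ∧ y = ⟨i, v⟩)

/-
In the complement of the central graph the edge vertices `c_e` form a clique, so at least `m`
colours are needed. With exactly `m` colours each colour is carried by a single `c_e`; a vertex
`u` can only share the colour of some `c_e` with `u ∈ e`, and two vertices cannot pick the same
edge since they would be adjacent and equally coloured, which forces `n ≤ m`.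

Conversely, an injective choice `u ↦ F u` of an incident edge yields a total dominator colouring
with `m` colours: colour `u` like `c_{F u}`; then `u` is dominated by the class `{c_{F w}, w}`,
where `w` is the other end of `F u`. Such a choice exists as soon as `G` has a cycle: take the
parent edges of a shortest-path tree rooted at an end `r` of a non-bridge `rs`, and `F r = rs`.
For a tree, root at an end `a'` of a path `a b a'`, give `a` and `a'` one new colour and colour
every other vertex like its parent edge; the class of `c_{ab}` is then a singleton.
-/

open Function

theorem Sym2.exists_notMem {α : Type*} [Fintype α] (h : 2 < Fintype.card α) (z : Sym2 α) :
    ∃ w, w ∉ z := by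
  classical
  induction z using Sym2.ind with
  | h x y =>
    obtain ⟨w, -, hw⟩ := Finset.exists_mem_notMem_of_card_lt_card (s := {x, y})
      (t := Finset.univ) (Finset.card_le_two.trans_lt (by simpa using h))
    exact ⟨w, by simpa using hw⟩

theorem Fintype.exists_ne_ne_ne {α : Type*} [Fintype α] (h : 3 < Fintype.card α) (a b c : α) :
    ∃ w, w ≠ a ∧ w ≠ b ∧ w ≠ c := by
  classical
  obtain ⟨w, -, hw⟩ := Finset.exists_mem_notMem_of_card_lt_card (s := {a, b, c})
    (t := Finset.univ) (Finset.card_le_three.trans_lt (by simpa using h))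
  exact ⟨w, by simpa [not_or] using hw⟩

theorem Set.exists_injective_lt_ncard {α : Type*} (s : Set α) [Finite s] :
    ∃ ι : s → ℕ, Injective ι ∧ ∀ x, ι x < s.ncard :=
  ⟨fun x => Finite.equivFin s x, Fin.val_injective.comp (Finite.equivFin s).injective,
    fun x => (Finite.equivFin s x).isLt⟩

namespace SimpleGraph

variable {V : Type*} {G : SimpleGraph V}

theorem Connected.exists_parent (hc : G.Connected) (r : V) :
    ∃ p : V → V, ∀ u ≠ r, G.Adj u (p u) ∧ G.dist r (p u) + 1 = G.dist r u := by
  have : ∀ u ≠ r, ∃ x, G.Adj u x ∧ G.dist r x + 1 = G.dist r u := by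
    intro u hu
    obtain ⟨w, hw⟩ := hc.exists_walk_length_eq_dist u r
    have hnil : ¬ w.Nil := Walk.not_nil_of_ne hu
    refine ⟨w.snd, w.adj_snd hnil, ?_⟩
    have hshort := dist_le w.tail
    have hlen := w.length_tail_add_one hnil
    have hstep := (w.adj_snd hnil).diff_dist_adj (u := r)
    rw [dist_comm] at hw hshort
    omega
  choose! p hp using this
  exact ⟨p, hp⟩

theorem injOn_parent_edge {r : V} {p : V → V}
    (hp : ∀ u ≠ r, G.dist r (p u) + 1 = G.dist r u) :
    Set.InjOn (fun u => s(u, p u)) {r}ᶜ := by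
  intro u hu v hv huv
  rcases Sym2.eq_iff.mp huv with ⟨h, -⟩ | ⟨rfl, hpu⟩
  · exact h
  · have := hp _ hu
    have := hp v hv
    rw [hpu] at *
    omega

theorem Connected.exists_injective_incident_edge_of_not_isAcyclic (hc : G.Connected)
    (hcyc : ¬ G.IsAcyclic) : ∃ F : V → G.edgeSet, Injective F ∧ ∀ u, u ∈ (F u : Sym2 V) := by
  classical
  obtain ⟨r, s, hrs, hbr⟩ : ∃ r s, G.Adj r s ∧ ¬ G.IsBridge s(r, s) := by
    simpa [isAcyclic_iff_forall_adj_isBridge] using hcyc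
  obtain ⟨p, hp⟩ := (hc.connected_delete_edge_of_not_isBridge hbr).exists_parent r
  have hadj : ∀ u ≠ r, G.Adj u (p u) ∧ s(u, p u) ≠ s(r, s) := fun u hu => by
    simpa using (hp u hu).1
  refine ⟨fun u => if h : u = r then ⟨s(r, s), hrs⟩ else ⟨s(u, p u), (hadj u h).1⟩, ?_, ?_⟩
  · intro u v huv
    rw [Subtype.ext_iff] at huv
    by_cases hu : u = r <;> by_cases hv : v = r <;>
      simp only [hu, hv, dite_true, dite_false] at huv
    · rw [hu, hv]
    · exact absurd huv.symm (hadj v hv).2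
    · exact absurd huv (hadj u hu).2
    · exact injOn_parent_edge (fun u hu => (hp u hu).2) hu hv huv
  · intro u
    by_cases hu : u = r <;> simp [hu]

theorem IsTree.exists_ne_not_adj [Fintype V] (hT : G.IsTree) (h3 : 2 < Fintype.card V) :
    ∃ u v, u ≠ v ∧ ¬ G.Adj u v := by
  by_contra! hcomplete
  obtain ⟨x, y, hxy⟩ := Fintype.exists_pair_of_one_lt_card (by omega : 1 < Fintype.card V)
  obtain ⟨z, hz⟩ := Sym2.exists_notMem h3 s(x, y)
  simp only [Sym2.mem_iff, not_or] at hz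
  apply hT.dist_ne_of_adj x (hcomplete y z (Ne.symm hz.2))
  rw [dist_eq_one_iff_adj.mpr (hcomplete x y hxy),
    dist_eq_one_iff_adj.mpr (hcomplete x z (Ne.symm hz.1))]

end SimpleGraph

namespace centralGraph

variable {V : Type*} {G : SimpleGraph V}

@[simp]
theorem compl_adj_inl_inl {u v : V} :
    (centralGraph G)ᶜ.Adj (.inl u) (.inl v) ↔ G.Adj u v := by
  simp only [compl_adj, ne_eq, Sum.inl.injEq, centralGraph]
  exact ⟨fun h => not_not.mp fun hn => h.2 ⟨h.1, hn⟩, fun h => ⟨h.ne, fun h' => h'.2 h⟩⟩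

@[simp]
theorem compl_adj_inl_inr {u : V} {e : G.edgeSet} :
    (centralGraph G)ᶜ.Adj (.inl u) (.inr e) ↔ u ∉ (e : Sym2 V) := by
  simp [centralGraph]

@[simp]
theorem compl_adj_inr_inl {u : V} {e : G.edgeSet} :
    (centralGraph G)ᶜ.Adj (.inr e) (.inl u) ↔ u ∉ (e : Sym2 V) := by
  simp [centralGraph]

@[simp]
theorem compl_adj_inr_inr {e e' : G.edgeSet} :
    (centralGraph G)ᶜ.Adj (.inr e) (.inr e') ↔ e ≠ e' := by
  simp [centralGraph]

section LowerBounds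

variable {f : V ⊕ G.edgeSet → ℕ} (hf : ∀ x y, (centralGraph G)ᶜ.Adj x y → f x ≠ f y)
include hf

theorem injective_comp_inr_of_proper : Injective (f ∘ Sum.inr) :=
  fun _ _ h => by_contra fun hne => hf _ _ (compl_adj_inr_inr.mpr hne) h

theorem ncard_edgeSet_le_of_proper {k : ℕ} (hk : ∀ x, f x < k) : G.edgeSet.ncard ≤ k := by
  have hinj : Injective fun e : G.edgeSet => (⟨f (.inr e), hk _⟩ : Fin k) :=
    fun e e' h => injective_comp_inr_of_proper hf (Fin.mk.inj_iff.mp h)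
  simpa using Nat.card_le_card_of_injective _ hinj

theorem card_le_ncard_edgeSet_of_proper [Finite V] (hk : ∀ x, f x < G.edgeSet.ncard) :
    Nat.card V ≤ G.edgeSet.ncard := by
  let g : G.edgeSet → Fin G.edgeSet.ncard := fun e => ⟨f (.inr e), hk _⟩
  have hg : Injective g := fun e e' h => injective_comp_inr_of_proper hf (Fin.mk.inj_iff.mp h)
  have hsurj := (hg.bijective_of_nat_card_le (by simp)).surjective
  choose edgeOf hedgeOf using fun u : V => hsurj ⟨f (.inl u), hk _⟩
  have hcolor : ∀ u, f (.inr (edgeOf u)) = f (.inl u) := fun u => Fin.mk.inj_iff.mp (hedgeOf u)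
  have hmem : ∀ u, u ∈ (edgeOf u : Sym2 V) := fun u => by
    by_contra h
    exact hf _ _ (compl_adj_inl_inr.mpr h) (hcolor u).symm
  have hinj : Injective edgeOf := by
    intro u v huv
    by_contra hne
    have hedge : (edgeOf u : Sym2 V) = s(u, v) :=
      (Sym2.mem_and_mem_iff hne).mp ⟨hmem u, huv ▸ hmem v⟩
    have hadj : G.Adj u v := by simpa [hedge] using (edgeOf u).2
    exact hf _ _ (compl_adj_inl_inl.mpr hadj) (by rw [← hcolor, ← hcolor, huv])
  simpa using Nat.card_le_card_of_injective _ hinj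

end LowerBounds

theorem isTDColoring_compl_sum_elim {c : V → ℕ} {ι : G.edgeSet → ℕ} (hι : Injective ι)
    (hadj : ∀ u v, G.Adj u v → c u ≠ c v) (hinc : ∀ u e, c u = ι e → u ∈ (e : Sym2 V))
    (hdomV : ∀ u, ∃ x, (∀ v, c v = Sum.elim c ι x → G.Adj u v) ∧
      ∀ e, ι e = Sum.elim c ι x → u ∉ (e : Sym2 V))
    (hdomE : ∀ e : G.edgeSet, ∃ x, (∀ v, c v = Sum.elim c ι x → v ∉ (e : Sym2 V)) ∧
      ∀ e', ι e' = Sum.elim c ι x → e ≠ e') :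
    IsTDColoring (centralGraph G)ᶜ (Sum.elim c ι) := by
  refine ⟨?_, ?_⟩
  · rintro (u | e) (v | e') h <;> simp only [compl_adj_inl_inl, compl_adj_inl_inr,
      compl_adj_inr_inl, compl_adj_inr_inr, Sum.elim_inl, Sum.elim_inr] at h ⊢
    · exact hadj u v h
    · exact fun h' => h (hinc u e' h')
    · exact fun h' => h (hinc v e h'.symm)
    · exact hι.ne h
  · rintro (u | e)
    · obtain ⟨x, hV, hE⟩ := hdomV u
      refine ⟨_, ⟨x, rfl⟩, ?_⟩
      rintro (v | e) h
      exacts [compl_adj_inl_inl.mpr (hV v h), compl_adj_inl_inr.mpr (hE e h)]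
    · obtain ⟨x, hV, hE⟩ := hdomE e
      refine ⟨_, ⟨x, rfl⟩, ?_⟩
      rintro (v | e') h
      exacts [compl_adj_inr_inl.mpr (hV v h), compl_adj_inr_inr.mpr (hE e' h)]

theorem isTDColoring_compl_of_injective_incident [Fintype V] {ι : G.edgeSet → ℕ}
    (hι : Injective ι) {F : V → G.edgeSet} (hF : Injective F) (hmem : ∀ u, u ∈ (F u : Sym2 V))
    (h3 : 2 < Fintype.card V) :
    IsTDColoring (centralGraph G)ᶜ (Sum.elim (fun u => ι (F u)) ι) := by
  have hclass : ∀ v w, ι (F v) = ι (F w) → v = w := fun v w h => hF (hι h)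
  refine isTDColoring_compl_sum_elim hι (fun u v h huv => h.ne (hclass u v huv))
    (fun u e h => hι h ▸ hmem u) (fun u => ?_) (fun e => ?_)
  · obtain ⟨w, hw⟩ := Sym2.mem_iff_exists.mp (hmem u)
    have huw : G.Adj u w := G.mem_edgeSet.mp (hw ▸ (F u).2)
    refine ⟨.inl w, fun v hv => hclass v w hv ▸ huw, fun e he hue => ?_⟩
    obtain rfl : e = F w := hι he
    have hFw : (F w : Sym2 V) = s(u, w) := (Sym2.mem_and_mem_iff huw.ne).mp ⟨hue, hmem w⟩
    exact huw.ne (hF (Subtype.ext (hw.trans hFw.symm)))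
  · obtain ⟨w, hw⟩ := Sym2.exists_notMem h3 (e : Sym2 V)
    refine ⟨.inl w, fun v hv => hclass v w hv ▸ hw, fun e' he' hee' => ?_⟩
    obtain rfl : e' = F w := hι he'
    exact hw (hee' ▸ hmem w)

section Cherry

variable [DecidableEq V] {ι : G.edgeSet → ℕ} {K : ℕ} {a a' : V} {F : V → G.edgeSet}

def cherryColoring (ι : G.edgeSet → ℕ) (K : ℕ) (a a' : V) (F : V → G.edgeSet) (u : V) : ℕ :=
  if u = a ∨ u = a' then K else ι (F u)

theorem cherryColoring_of_end {u : V} (hu : u = a ∨ u = a') : cherryColoring ι K a a' F u = K :=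
  if_pos hu

theorem cherryColoring_of_not_end {u : V} (hu : ¬(u = a ∨ u = a')) :
    cherryColoring ι K a a' F u = ι (F u) :=
  if_neg hu

theorem eq_end_of_cherryColoring_eq (hK : ∀ e, ι e ≠ K) {v : V}
    (hv : cherryColoring ι K a a' F v = K) : v = a ∨ v = a' := by
  by_contra h
  exact hK _ ((cherryColoring_of_not_end h).symm.trans hv)

theorem eq_of_cherryColoring_eq (hι : Injective ι) (hK : ∀ e, ι e ≠ K) {v : V} {e : G.edgeSet}
    (hv : cherryColoring ι K a a' F v = ι e) : ¬(v = a ∨ v = a') ∧ F v = e := by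
  by_cases h : v = a ∨ v = a'
  · exact absurd ((cherryColoring_of_end h).symm.trans hv).symm (hK e)
  · exact ⟨h, hι ((cherryColoring_of_not_end h).symm.trans hv)⟩

theorem eq_of_cherryColoring_eq_of_not_end (hι : Injective ι) (hK : ∀ e, ι e ≠ K)
    (hF : Set.InjOn F {a, a'}ᶜ) {v w : V} (hw : ¬(w = a ∨ w = a'))
    (hv : cherryColoring ι K a a' F v = cherryColoring ι K a a' F w) : v = w := by
  obtain ⟨hvS, hFv⟩ := eq_of_cherryColoring_eq hι hK (hv.trans (cherryColoring_of_not_end hw))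
  exact hF hvS hw hFv

theorem cherryColoring_ne_of_adj (hι : Injective ι) (hK : ∀ e, ι e ≠ K) (hna : ¬ G.Adj a a')
    (hF : Set.InjOn F {a, a'}ᶜ) {u v : V} (huv : G.Adj u v) :
    cherryColoring ι K a a' F u ≠ cherryColoring ι K a a' F v := by
  intro h
  by_cases hu : u = a ∨ u = a'
  · have hv := eq_end_of_cherryColoring_eq hK (h ▸ cherryColoring_of_end hu)
    rcases hu with rfl | rfl <;> rcases hv with rfl | rfl
    exacts [huv.ne rfl, hna huv, hna huv.symm, huv.ne rfl]
  · exact huv.ne (eq_of_cherryColoring_eq_of_not_end hι hK hF hu h.symm).symm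

theorem cherryColoring_ne_of_val_eq (hι : Injective ι) (hK : ∀ e, ι e ≠ K) {b : V} (haa' : a ≠ a')
    (hmem : ∀ u, u ∈ (F u : Sym2 V)) (hFb : (F b : Sym2 V) = s(b, a')) {e : G.edgeSet}
    (he : (e : Sym2 V) = s(a, b)) (v : V) : cherryColoring ι K a a' F v ≠ ι e := by
  intro hv
  obtain ⟨hvS, rfl⟩ := eq_of_cherryColoring_eq hι hK hv
  rcases Sym2.mem_iff.mp (he ▸ hmem v) with rfl | rfl
  · exact hvS (Or.inl rfl)
  · have : s(v, a') = s(v, a) := by rw [← hFb, he, Sym2.eq_swap]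
    exact haa' (Sym2.congr_right.mp this).symm

theorem isTDColoring_compl_of_cherry [Fintype V] (hι : Injective ι) (hK : ∀ e, ι e ≠ K) {b : V}
    (hab : G.Adj a b) (ha'b : G.Adj a' b) (haa' : a ≠ a') (hna : ¬ G.Adj a a')
    (hF : Set.InjOn F {a, a'}ᶜ) (hmem : ∀ u, u ∈ (F u : Sym2 V))
    (hFb : (F b : Sym2 V) = s(b, a')) (h4 : 3 < Fintype.card V) :
    IsTDColoring (centralGraph G)ᶜ (Sum.elim (cherryColoring ι K a a' F) ι) := by
  have hbS : ¬(b = a ∨ b = a') := by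
    rintro (h | h)
    exacts [hab.ne h.symm, ha'b.ne h.symm]
  have hca : cherryColoring ι K a a' F a = K := cherryColoring_of_end (Or.inl rfl)
  have hcb : cherryColoring ι K a a' F b = ι (F b) := cherryColoring_of_not_end hbS
  let e₀ : G.edgeSet := ⟨s(a, b), hab⟩
  have he₀ := cherryColoring_ne_of_val_eq hι hK haa' hmem hFb (e := e₀) rfl
  refine isTDColoring_compl_sum_elim hι (fun u v => cherryColoring_ne_of_adj hι hK hna hF)
    (fun u e h => (eq_of_cherryColoring_eq hι hK h).2 ▸ hmem u) (fun u => ?_) (fun e => ?_)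
  · by_cases hub : u = b
    · subst hub
      refine ⟨.inl a, fun v hv => ?_, fun e he => absurd (he.trans hca) (hK e)⟩
      rcases eq_end_of_cherryColoring_eq hK (hv.trans hca) with rfl | rfl
      exacts [hab.symm, ha'b.symm]
    by_cases hua : u = a
    · subst hua
      refine ⟨.inl b, fun v hv => ?_, fun e he => ?_⟩
      · rwa [eq_of_cherryColoring_eq_of_not_end hι hK hF hbS hv]
      · obtain rfl := hι (he.trans hcb)
        rw [hFb, Sym2.mem_iff]
        rintro (h | h)
        exacts [hub h, haa' h]
    · refine ⟨.inr e₀, fun v hv => absurd hv (he₀ v), fun e he => ?_⟩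
      obtain rfl := hι he
      rw [Sym2.mem_iff]
      rintro (h | h)
      exacts [hua h, hub h]
  · by_cases he : e = e₀
    · subst he
      obtain ⟨w, hwa, hwb, hwa'⟩ := Fintype.exists_ne_ne_ne h4 a b a'
      have hwS : ¬(w = a ∨ w = a') := by tauto
      refine ⟨.inl w, fun v hv => ?_, fun e he => ?_⟩
      · simp [eq_of_cherryColoring_eq_of_not_end hι hK hF hwS hv, e₀, hwa, hwb]
      · obtain rfl := hι (he.trans (cherryColoring_of_not_end hwS))
        intro h
        simpa [← h, e₀, hwa, hwb] using hmem w
    · exact ⟨.inr e₀, fun v hv => absurd hv (he₀ v), fun e' he' => (hι he').symm ▸ he⟩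

end Cherry

end centralGraph

namespace SimpleGraph

variable {V : Type*} [Fintype V] {G : SimpleGraph V}

theorem IsTree.exists_isTDColoring_compl_centralGraph (hT : G.IsTree) (h4 : 3 < Fintype.card V) :
    ∃ f, IsTDColoring (centralGraph G)ᶜ f ∧ ∀ x, f x < G.edgeSet.ncard + 1 := by
  classical
  obtain ⟨u, v, huv, hnadj⟩ := hT.exists_ne_not_adj (by omega)
  obtain ⟨w, hw⟩ := hT.connected.exists_walk_length_eq_dist u v
  obtain ⟨a', b, a, ha'b, hba, hna'a, hne⟩ :=
    w.exists_adj_adj_not_adj_ne hw (hT.connected.one_lt_dist_of_ne_of_not_adj huv hnadj)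
  obtain ⟨p, hp⟩ := hT.connected.exists_parent a'
  have hpb : p b = a' := by
    have := (hp b ha'b.ne').2
    rw [dist_eq_one_iff_adj.mpr ha'b] at this
    exact (hT.connected.dist_eq_zero_iff.mp (by omega)).symm
  let F : V → G.edgeSet := fun u =>
    if h : u = a' then ⟨s(a', b), ha'b⟩ else ⟨s(u, p u), (hp u h).1⟩
  have hF : ∀ u ≠ a', (F u : Sym2 V) = s(u, p u) := fun u hu => by simp [F, hu]
  obtain ⟨ι, hι, hιlt⟩ := G.edgeSet.exists_injective_lt_ncard
  refine ⟨_, centralGraph.isTDColoring_compl_of_cherry hι (fun e => (hιlt e).ne) hba.symm ha'b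
    hne.symm (fun h => hna'a h.symm) (F := F) (fun u hu v hv huv => ?_) (fun u => ?_)
    ((hF b ha'b.ne').trans (by rw [hpb])) h4, ?_⟩
  · have hu' : u ≠ a' := fun h => hu (Or.inr h)
    have hv' : v ≠ a' := fun h => hv (Or.inr h)
    exact injOn_parent_edge (fun u hu => (hp u hu).2) hu' hv'
      ((hF u hu').symm.trans ((congrArg Subtype.val huv).trans (hF v hv')))
  · by_cases hu : u = a'
    · simp [F, hu]
    · simp [hF u hu]
  · rintro (u | e)
    · dsimp only [Sum.elim_inl, centralGraph.cherryColoring]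
      split_ifs
      exacts [Nat.lt_succ_self _, (hιlt _).trans (Nat.lt_succ_self _)]
    · exact (hιlt e).trans (Nat.lt_succ_self _)

theorem Connected.exists_isTDColoring_compl_centralGraph_of_not_isTree
    (hc : G.Connected) (hnT : ¬ G.IsTree) (h3 : 2 < Fintype.card V) :
    ∃ f, IsTDColoring (centralGraph G)ᶜ f ∧ ∀ x, f x < G.edgeSet.ncard := by
  obtain ⟨F, hF, hmem⟩ :=
    hc.exists_injective_incident_edge_of_not_isAcyclic fun h => hnT ⟨hc, h⟩
  obtain ⟨ι, hι, hιlt⟩ := G.edgeSet.exists_injective_lt_ncard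
  exact ⟨_, centralGraph.isTDColoring_compl_of_injective_incident hι hF hmem h3,
    by rintro (u | e) <;> apply hιlt⟩

end SimpleGraph

theorem tdcn_eq_of {W : Type*} {H : SimpleGraph W} {k : ℕ}
    (hex : ∃ f, IsTDColoring H f ∧ ∀ x, f x < k)
    (hmin : ∀ j f, IsTDColoring H f → (∀ x, f x < j) → k ≤ j) : tdcn H = k :=
  le_antisymm (Nat.sInf_le hex) (le_csInf ⟨k, hex⟩ fun j ⟨f, hf, hj⟩ => hmin j f hf hj)

theorem tdcn_compl_central {V : Type*} [Fintype V] (G : SimpleGraph V)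
    (n m : ℕ) (hn : Fintype.card V = n) (hn4 : 4 ≤ n)
    (hm : G.edgeSet.ncard = m) (hconn : G.Connected) :
    (G.IsTree → tdcn (centralGraph G)ᶜ = n) ∧
    (¬ G.IsTree → tdcn (centralGraph G)ᶜ = m) := by
  subst hn hm
  refine ⟨fun hT => ?_, fun hnT => ?_⟩
  · have hcard : G.edgeSet.ncard + 1 = Fintype.card V := by
      simpa [Nat.card_eq_fintype_card] using (isTree_iff_connected_and_card.mp hT).2
    rw [← hcard]
    refine tdcn_eq_of (hT.exists_isTDColoring_compl_centralGraph hn4) fun j f hf hj => ?_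
    have hmj := centralGraph.ncard_edgeSet_le_of_proper hf.1 hj
    by_contra! hlt
    obtain rfl : j = G.edgeSet.ncard := by omega
    have := centralGraph.card_le_ncard_edgeSet_of_proper hf.1 hj
    rw [Nat.card_eq_fintype_card] at this
    omega
  · exact tdcn_eq_of (hconn.exists_isTDColoring_compl_centralGraph_of_not_isTree hnT (by omega))
      fun j f hf hj => centralGraph.ncard_edgeSet_le_of_proper hf.1 hj
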